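/- Let A be a C*-algebra, let a, b be positive elements of A, and let ε > 0 satisfy ‖a − b‖ < ε. Then for every λ > 0 one has (a − λ − ε)_+ ≼_A (b − λ)_+. -/

import Mathlib

/-! With `s = √((a - λ - ε)₊)`, a function of `a`, one has `(λ + ε) s² ≤ s a s`, while
`a ≤ b + ‖a - b‖` and `b ≤ (b - λ)₊ + λ` give
`s a s ≤ (‖a - b‖ + λ) s² + s (b - λ)₊ s`. Hence `(ε - ‖a - b‖) (a - λ - ε)₊ ≤ s (b - λ)₊ s`,
so `(a - λ - ε)₊` lies below a conjugate of `(b - λ)₊`. Finally `0 ≤ x ≤ y` implies `x ≼ y`,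
and Cuntz subequivalence is transitive. -/

/-- `a` is Cuntz subequivalent to `b` in `A`: for every `ε > 0` there is `y ∈ A` with
`‖y * b * y* - a‖ < ε`. -/
def CuntzLE {A : Type*} [NonUnitalNormedRing A] [StarRing A] (a b : A) : Prop :=
  ∀ ε > (0 : ℝ), ∃ y : A, ‖y * b * star y - a‖ < ε

/-- `(a - ε)₊`, the image of `a` under the continuous functional calculus applied to
`t ↦ max (t - ε) 0`. -/
noncomputable def cutdown {A : Type*} [NonUnitalCStarAlgebra A] (a : A) (ε : ℝ) : A :=
  cfcₙ (fun t : ℝ => max (t - ε) 0) a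

open scoped CStarAlgebra

section Cuntz

variable {A : Type*} [NonUnitalNormedRing A] [StarRing A]

theorem cuntzLE_iff_mem_closure {a b : A} :
    CuntzLE a b ↔ a ∈ closure (Set.range fun y : A => y * b * star y) := by
  simp only [CuntzLE, Metric.mem_closure_iff, Set.exists_range_iff, dist_eq_norm', gt_iff_lt]

theorem cuntzLE_mul_mul_star (z b : A) : CuntzLE (z * b * star z) b :=
  cuntzLE_iff_mem_closure.2 <| subset_closure ⟨z, rfl⟩

theorem CuntzLE.trans {a b c : A} (hab : CuntzLE a b) (hbc : CuntzLE b c) : CuntzLE a c := by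
  rw [cuntzLE_iff_mem_closure] at *
  refine closure_minimal ?_ isClosed_closure hab
  rintro _ ⟨z, rfl⟩
  refine map_mem_closure (f := fun w => z * w * star z) (by fun_prop) hbc ?_
  rintro _ ⟨y, rfl⟩
  exact ⟨z * y, by simp only [star_mul, mul_assoc]⟩

end Cuntz

section Norm

variable {B : Type*} [NonUnitalCStarAlgebra B] [PartialOrder B] [StarOrderedRing B]

theorem norm_star_mul_star_mul_self_mul_le {s c y : B} (h : s * star s ≤ y) :
    ‖star s * (star c * c) * s‖ ≤ ‖c * y * star c‖ :=
  calc ‖star s * (star c * c) * s‖ = ‖c * (s * star s) * star c‖ := by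
        rw [← mul_assoc, mul_assoc _ c, ← star_mul, CStarRing.norm_star_mul_self,
          ← CStarRing.norm_self_mul_star, star_mul, mul_assoc, mul_assoc, ← mul_assoc s]
    _ ≤ ‖c * y * star c‖ :=
        CStarAlgebra.norm_le_norm_of_nonneg_of_le
          (star_right_conjugate_nonneg (mul_star_self_nonneg s) c)
          (star_right_conjugate_le_conjugate h c)

end Norm

theorem mul_one_sub_div_add_sq_le {t u : ℝ} (ht : 0 < t) (hu : 0 ≤ u) :
    u * (1 - (u / (u + t)) ^ 2) ≤ 2 * t := by
  have hut : 0 < u + t := by positivity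
  rw [div_pow, one_sub_div (by positivity), mul_div_assoc', div_le_iff₀ (by positivity)]
  nlinarith [mul_nonneg hu ht.le, mul_pos ht ht]

theorem cfc_mul_mul_cfc {B : Type*} [CStarAlgebra B] {f : ℝ → ℝ} {a : B}
    (hf : ContinuousOn f (spectrum ℝ a)) (ha : IsSelfAdjoint a) :
    cfc f a * a * cfc f a = cfc (fun x => f x * x * f x) a := by
  rw [cfc_mul (fun x => f x * x) f a (hf.mul continuousOn_id) hf,
    cfc_mul f (fun x => x) a hf continuousOn_id, cfc_id' ℝ a]

section CuntzLE

variable {A : Type*} [NonUnitalCStarAlgebra A] [PartialOrder A] [StarOrderedRing A]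

/- The witness is `√x g(y)` with `g u = √u / (u + t)`, so that it conjugates `y` to
`√x ψ(y) √x` with `ψ u = (u / (u + t))²`. In the unitization the defect is `√x (1 - ψ(y)) √x`,
whose norm is at most `‖(1 - ψ(y))^½ y (1 - ψ(y))^½‖ ≤ 2t` because `x ≤ y`. -/
theorem CuntzLE.of_le {x y : A} (hx : 0 ≤ x) (hxy : x ≤ y) : CuntzLE x y := by
  intro η hη
  set t := η / 3 with ht_def
  have ht : 0 < t := by positivity
  set X : A⁺¹ := (x : A⁺¹)
  set Y : A⁺¹ := (y : A⁺¹)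
  have hXY : X ≤ Y :=
    (Unitization.inr_le_iff x y hx.isSelfAdjoint (hx.trans hxy).isSelfAdjoint).2 hxy
  have hY : 0 ≤ Y := Unitization.inr_nonneg_iff.2 (hx.trans hxy)
  have hσY : ∀ u ∈ spectrum ℝ Y, 0 ≤ u := fun u hu => spectrum_nonneg_of_nonneg hY hu
  let g : ℝ → ℝ := fun u => √u / (u + t)
  let ψ : ℝ → ℝ := fun u => (u / (u + t)) ^ 2
  let ρ : ℝ → ℝ := fun u => √(1 - ψ u)
  have hg : ContinuousOn g (spectrum ℝ Y) :=
    Real.continuous_sqrt.continuousOn.div (by fun_prop)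
      fun u hu => (add_pos_of_nonneg_of_pos (hσY u hu) ht).ne'
  have hψ : ∀ u ∈ spectrum ℝ Y, g u * u * g u = ψ u := fun u hu => by
    have := Real.sq_sqrt (hσY u hu)
    simp only [g, ψ]
    field_simp
    rw [this]
    ring
  have hψ_le : ∀ u ∈ spectrum ℝ Y, ψ u ≤ 1 := fun u hu => by
    have := hσY u hu
    exact pow_le_one₀ (by positivity) ((div_le_one (by positivity)).2 (by linarith))
  have hψc : ContinuousOn ψ (spectrum ℝ Y) :=
    (continuousOn_id.div (by fun_prop) fun u hu =>
      (add_pos_of_nonneg_of_pos (hσY u hu) ht).ne').pow 2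
  have hρ : ContinuousOn ρ (spectrum ℝ Y) :=
    Real.continuous_sqrt.comp_continuousOn (continuousOn_const.sub hψc)
  set S : A⁺¹ := CFC.sqrt X
  set c : A⁺¹ := cfc ρ Y
  have hS : star S = S := (CFC.sqrt_nonneg X).isSelfAdjoint.star_eq
  have hc : star c * c = 1 - cfc ψ Y := by
    rw [(cfc_predicate ρ Y).star_eq, ← cfc_mul ρ ρ Y, ← cfc_const_one ℝ Y,
      ← cfc_sub (fun _ => 1) ψ Y]
    exact cfc_congr fun u hu => Real.mul_self_sqrt (sub_nonneg.2 (hψ_le u hu))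
  refine ⟨CFC.sqrt x * cfcₙ g y, ?_⟩
  have hv : ((CFC.sqrt x * cfcₙ g y * y * star (CFC.sqrt x * cfcₙ g y) - x : A) : A⁺¹)
      = -(star S * (star c * c) * S) := by
    have hQ : cfc g Y * Y * cfc g Y = cfc ψ Y := by
      rw [cfc_mul_mul_cfc hg hY.isSelfAdjoint, cfc_congr hψ]
    rw [star_mul, (CFC.sqrt_nonneg x).isSelfAdjoint.star_eq, (cfcₙ_predicate g y).star_eq]
    simp only [Unitization.inr_sub, Unitization.inr_mul]
    rw [Unitization.real_cfcₙ_eq_cfc_inr y g (by simp [g]), ← Unitization.sqrt_inr]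
    change S * cfc g Y * Y * (cfc g Y * S) - X = _
    rw [hc, hS, ← CFC.sqrt_mul_sqrt_self X, ← hQ]
    noncomm_ring
  have hcYc : ‖c * Y * star c‖ ≤ 2 * t := by
    rw [(cfc_predicate ρ Y).star_eq, cfc_mul_mul_cfc hρ hY.isSelfAdjoint]
    refine norm_cfc_le (by positivity) fun u hu => ?_
    have hρu : ρ u * u * ρ u = u * (1 - ψ u) := by
      rw [mul_comm (ρ u), mul_assoc, Real.mul_self_sqrt (sub_nonneg.2 (hψ_le u hu))]
    rw [hρu, Real.norm_of_nonneg (mul_nonneg (hσY u hu) (sub_nonneg.2 (hψ_le u hu)))]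
    exact mul_one_sub_div_add_sq_le ht (hσY u hu)
  calc ‖CFC.sqrt x * cfcₙ g y * y * star (CFC.sqrt x * cfcₙ g y) - x‖
      = ‖star S * (star c * c) * S‖ := by rw [← Unitization.norm_inr (𝕜 := ℂ), hv, norm_neg]
    _ ≤ ‖c * Y * star c‖ :=
        norm_star_mul_star_mul_self_mul_le (by rwa [hS, CFC.sqrt_mul_sqrt_self X])
    _ < η := by linarith

end CuntzLE

section Cutdown

variable {A : Type*} [NonUnitalCStarAlgebra A] [PartialOrder A] [StarOrderedRing A]

theorem cutdown_nonneg (a : A) (c : ℝ) : 0 ≤ cutdown a c :=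
  cfcₙ_nonneg fun _ _ => le_max_right _ _

theorem norm_sub_cutdown_le {b : A} (hb : 0 ≤ b) {c : ℝ} (hc : 0 ≤ c) :
    ‖b - cutdown b c‖ ≤ c := by
  nth_rewrite 1 [← cfcₙ_id' ℝ b]
  rw [cutdown, ← cfcₙ_sub (fun t => t) _ b continuousOn_id rfl (by fun_prop) (by simpa)]
  refine norm_cfcₙ_le fun u hu => ?_
  have hu := quasispectrum_nonneg_of_nonneg b hb u hu
  rw [Real.norm_eq_abs, abs_le]
  constructor <;> cases max_cases (u - c) 0 <;> linarith

theorem exists_smul_cutdown_le_conj {a b : A} (ha : IsSelfAdjoint a) (hb : 0 ≤ b) {lam ε : ℝ}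
    (hlam : 0 ≤ lam) (hε : 0 ≤ ε) :
    ∃ s : A, (ε - ‖a - b‖) • cutdown a (lam + ε) ≤ s * cutdown b lam * star s := by
  set e := cutdown a (lam + ε)
  set f := cutdown b lam
  let r : ℝ → ℝ := fun t => √(max (t - (lam + ε)) 0)
  have hr0 : r 0 = 0 := by simp [r]; linarith
  let s := cfcₙ r a
  have hs : star s = s := (cfcₙ_predicate r a).star_eq
  have hss : s * s = e := by
    rw [← cfcₙ_mul r r a]
    exact cfcₙ_congr fun u _ => Real.mul_self_sqrt (le_max_right _ _)
  have hsas : (lam + ε) • e ≤ s * a * s :=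
    calc (lam + ε) • e = cfcₙ (fun t => (lam + ε) * max (t - (lam + ε)) 0) a :=
          (cfcₙ_const_mul _ _ a).symm
      _ ≤ cfcₙ (fun t => r t * t * r t) a := cfcₙ_mono fun t _ => by
          rw [mul_comm (r t), mul_assoc, Real.mul_self_sqrt (le_max_right _ _)]
          rcases le_total t (lam + ε) with ht | ht
          · simp [max_eq_right (sub_nonpos.2 ht)]
          · rw [max_eq_left (sub_nonneg.2 ht)]
            nlinarith
      _ = s * a * s := by
          rw [cfcₙ_mul (fun t => r t * t) r a (hf0 := by simp [hr0]), cfcₙ_mul r (fun t => t) a,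
            cfcₙ_id' ℝ a]
  have hab : s * (a - b) * s ≤ ‖a - b‖ • e := by
    simpa only [hs, hss] using CStarAlgebra.star_left_conjugate_le_norm_smul (a := s)
      (ha.sub hb.isSelfAdjoint)
  have hbf : s * (b - f) * s ≤ lam • e := by
    have := CStarAlgebra.star_left_conjugate_le_norm_smul (a := s)
      (hb.isSelfAdjoint.sub (cutdown_nonneg b lam).isSelfAdjoint)
    rw [hs, hss] at this
    refine this.trans ?_
    exact smul_le_smul_of_nonneg_right (norm_sub_cutdown_le hb hlam) (cutdown_nonneg a _)
  refine ⟨s, ?_⟩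
  calc (ε - ‖a - b‖) • e = (lam + ε) • e - (‖a - b‖ • e + lam • e) := by
        simp only [sub_smul, add_smul]; abel
    _ ≤ s * a * s - (s * (a - b) * s + s * (b - f) * s) := sub_le_sub hsas (add_le_add hab hbf)
    _ = s * f * star s := by rw [hs]; noncomm_ring

theorem exists_cutdown_le_conj {a b : A} (ha : IsSelfAdjoint a) (hb : 0 ≤ b) {lam ε : ℝ}
    (hlam : 0 ≤ lam) (h : ‖a - b‖ < ε) :
    ∃ z : A, cutdown a (lam + ε) ≤ z * cutdown b lam * star z := by
  obtain ⟨s, hs⟩ := exists_smul_cutdown_le_conj ha hb hlam ((norm_nonneg _).trans h.le)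
  set δ := ε - ‖a - b‖
  have hδ : 0 < δ := sub_pos.2 h
  refine ⟨(√δ)⁻¹ • s, ?_⟩
  have hz : (√δ)⁻¹ • s * cutdown b lam * star ((√δ)⁻¹ • s)
      = δ⁻¹ • (s * cutdown b lam * star s) := by
    rw [star_smul, star_trivial, smul_mul_assoc, smul_mul_assoc, mul_smul_comm, smul_smul,
      ← mul_inv, Real.mul_self_sqrt hδ.le]
  rw [hz, ← inv_smul_smul₀ hδ.ne' (cutdown a _)]
  exact smul_le_smul_of_nonneg_left hs (inv_nonneg.2 hδ.le)

end Cutdown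

theorem stmt2_general {A : Type*} [NonUnitalCStarAlgebra A] [PartialOrder A] [StarOrderedRing A]
    (a b : A) (ha : 0 ≤ a) (hb : 0 ≤ b) (ε : ℝ) (h : ‖a - b‖ < ε) :
    ∀ lam > (0 : ℝ), CuntzLE (cutdown a (lam + ε)) (cutdown b lam) := by
  intro lam hlam
  obtain ⟨z, hz⟩ := exists_cutdown_le_conj ha.isSelfAdjoint hb hlam.le h
  exact (CuntzLE.of_le (cutdown_nonneg a _) hz).trans (cuntzLE_mul_mul_star z _)

theorem stmt2 {A : Type*} [NonUnitalCStarAlgebra A] [PartialOrder A] [StarOrderedRing A]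
    (a b : A) (ha : 0 ≤ a) (hb : 0 ≤ b) (ε : ℝ) (hε : 0 < ε) (h : ‖a - b‖ < ε) :
    ∀ lam > (0 : ℝ), CuntzLE (cutdown a (lam + ε)) (cutdown b lam) :=
  stmt2_general a b ha hb ε h
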